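/- The connected components lasso is the only nontrivial lasso on Grph up to isomorphism: if (L, η) is a lasso on Grph such that not every component η_G is an isomorphism, then for every graph G there is an isomorphism θ_G : L(G) ≅ cc(G) satisfying θ_G ∘ η_G = π_G. -/

import Mathlib

open CategoryTheory CategoryTheory.Limits

/-- The category of directed multigraphs, realized as the functor category from the
walking parallel pair (objects `zero` = edges, `one` = vertices; morphisms
`left` = source, `right` = target) to `Type`. -/
abbrev Grph : Type 1 := WalkingParallelPair ⥤ Type

namespace Grph

/-- The source map of a graph. -/
def src (G : Grph) : G.obj .zero → G.obj .one := G.map .left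

/-- The target map of a graph. -/
def tgt (G : Grph) : G.obj .zero → G.obj .one := G.map .right

/-- The connectivity relation on the vertices of a graph: the equivalence relation
generated by relating `u` and `v` whenever some edge has source `u` and target `v`. -/
def connRel (G : Grph) : G.obj .one → G.obj .one → Prop :=
  Relation.EqvGen fun u v => ∃ e, G.src e = u ∧ G.tgt e = v

lemma connRel_map {G H : Grph} (φ : G ⟶ H) {u v : G.obj .one} (h : G.connRel u v) :
    H.connRel (φ.app .one u) (φ.app .one v) := by
  induction h with
  | rel u v h =>
      obtain ⟨e, he, he'⟩ := h
      refine Relation.EqvGen.rel _ _ ⟨φ.app .zero e, ?_, ?_⟩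
      · rw [← he]; exact (ConcreteCategory.congr_hom (φ.naturality WalkingParallelPairHom.left) e).symm
      · rw [← he']; exact (ConcreteCategory.congr_hom (φ.naturality WalkingParallelPairHom.right) e).symm
  | refl u => exact Relation.EqvGen.refl _
  | symm u v _ ih => exact Relation.EqvGen.symm _ _ ih
  | trans u v w _ _ ih₁ ih₂ => exact Relation.EqvGen.trans _ _ _ ih₁ ih₂

/-- The graph obtained from `G` by quotienting its vertex set by the connectivity
relation; its edge set is that of `G`. -/
def ccObj (G : Grph) : Grph :=
  parallelPair (TypeCat.ofHom fun e => Quot.mk G.connRel (G.src e))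
    (TypeCat.ofHom fun e => Quot.mk G.connRel (G.tgt e))

/-- The action of the connected components construction on graph homomorphisms. -/
def ccMap {G H : Grph} (φ : G ⟶ H) : ccObj G ⟶ ccObj H :=
  parallelPairHom _ _ _ _ (φ.app .zero)
    (TypeCat.ofHom (Quot.map (φ.app .one) (fun _ _ h => connRel_map φ h)))
    (by
      ext e
      exact congrArg (Quot.mk H.connRel)
        (ConcreteCategory.congr_hom (φ.naturality WalkingParallelPairHom.left) e))
    (by
      ext e
      exact congrArg (Quot.mk H.connRel)
        (ConcreteCategory.congr_hom (φ.naturality WalkingParallelPairHom.right) e))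

/-- The connected components functor `cc : Grph ⥤ Grph`. -/
def cc : Grph ⥤ Grph where
  obj := ccObj
  map := ccMap
  map_id G := by
    apply NatTrans.ext
    funext x
    cases x
    · ext q
      rfl
    · ext q
      induction q using Quot.ind
      rfl
  map_comp φ ψ := by
    apply NatTrans.ext
    funext x
    cases x
    · ext q
      rfl
    · ext q
      induction q using Quot.ind
      rfl

/-- The quotient homomorphism `π_G : G ⟶ cc(G)` (identity on edges). -/
def ccπ (G : Grph) : G ⟶ cc.obj G where
  app x := match x with
    | .zero => TypeCat.ofHom fun e => e
    | .one => TypeCat.ofHom fun v => Quot.mk G.connRel v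
  naturality := by
    intro X Y (f : WalkingParallelPairHom X Y)
    cases f with
    | id =>
        show G.map (𝟙 _) ≫ _ = _ ≫ (cc.obj G).map (𝟙 _)
        rw [CategoryTheory.Functor.map_id, CategoryTheory.Functor.map_id,
          Category.id_comp, Category.comp_id]
    | left => rfl
    | right => rfl

/-- The graph with one vertex and two loop edges. -/
def twoLoops : Grph := parallelPair (TypeCat.ofHom fun _ : Bool => PUnit.unit)
    (TypeCat.ofHom fun _ : Bool => PUnit.unit)

/-- The terminal graph: one vertex with a single loop edge. -/
def oneLoop : Grph := parallelPair (TypeCat.ofHom fun _ : PUnit => PUnit.unit)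
    (TypeCat.ofHom fun _ : PUnit => PUnit.unit)

end Grph

/-- A lasso on a category `C`: an endofunctor preserving pushouts of spans of
monomorphisms, together with a natural transformation from the identity functor all of
whose components are epimorphisms. -/
structure Lasso (C : Type u) [Category.{v} C] where
  /-- The underlying endofunctor. -/
  L : C ⥤ C
  /-- The natural transformation from the identity functor. -/
  η : 𝟭 C ⟶ L
  /-- `L` preserves pushouts of spans of monomorphisms. -/
  preserves_monic_pushouts :
    ∀ ⦃A B D P : C⦄ (f : A ⟶ B) (g : A ⟶ D) (h : B ⟶ P) (k : D ⟶ P),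
      Mono f → Mono g → IsPushout f g h k →
      IsPushout (L.map f) (L.map g) (L.map h) (L.map k)
  /-- Every component of `η` is an epimorphism. -/
  epi_components : ∀ X : C, Epi (η.app X)

open Grph

namespace Stmt8Aux

open Grph

/-- If the corner of a pushout square in `Type` is empty, the two legs have
disjoint images. -/
lemma types_disjoint_of_isPushout {A B D P : Type} {f : A ⟶ B} {g : A ⟶ D} {h : B ⟶ P}
    {k : D ⟶ P} (po : IsPushout f g h k) (hA : IsEmpty A) (b : B) (d : D) : h b ≠ k d := by
  intro hbd
  have w : f ≫ (TypeCat.ofHom (fun _ => true) : B ⟶ Bool) =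
      g ≫ (TypeCat.ofHom (fun _ => false) : D ⟶ Bool) :=
    ConcreteCategory.hom_ext _ _ fun a => hA.elim a
  have h1 := ConcreteCategory.congr_hom (po.inl_desc _ _ w) b
  have h2 := ConcreteCategory.congr_hom (po.inr_desc _ _ w) d
  rw [show (h ≫ po.desc _ _ w) b = po.desc _ _ w (h b) from rfl, hbd] at h1
  rw [show (k ≫ po.desc _ _ w) d = po.desc _ _ w (k d) from rfl] at h2
  exact Bool.noConfusion (h1.symm.trans h2)

/-- A "partition" square in `Type` with empty corner is a pushout. -/
lemma types_isPushout_of_isEmpty {A B D P : Type} (f : A ⟶ B) (g : A ⟶ D) (h : B ⟶ P)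
    (k : D ⟶ P) (hA : IsEmpty A) (hinj : Function.Injective h)
    (kinj : Function.Injective k) (disj : ∀ b d, h b ≠ k d)
    (jsurj : ∀ p, (∃ b, h b = p) ∨ ∃ d, k d = p) :
    IsPushout f g h k := by
  classical
  have w : f ≫ h = g ≫ k := ConcreteCategory.hom_ext _ _ fun a => hA.elim a
  let dsc : ∀ s : PushoutCocone f g, P → s.pt := fun s p =>
    if hb : ∃ b, h b = p then s.inl hb.choose else s.inr ((jsurj p).resolve_left hb).choose
  have facl : ∀ s b, dsc s (h b) = s.inl b := by
    intro s b
    have hb : ∃ b', h b' = h b := ⟨b, rfl⟩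
    simp only [dsc, dif_pos hb]
    exact congrArg s.inl (hinj hb.choose_spec)
  have facr : ∀ s d, dsc s (k d) = s.inr d := by
    intro s d
    have hb : ¬∃ b, h b = k d := fun ⟨b, hb⟩ => disj b d hb
    simp only [dsc, dif_neg hb]
    exact congrArg s.inr (kinj ((jsurj (k d)).resolve_left hb).choose_spec)
  refine ⟨⟨w⟩, ⟨PushoutCocone.IsColimit.mk w (fun s => TypeCat.ofHom (dsc s))
    (fun s => ConcreteCategory.hom_ext _ _ (facl s))
    (fun s => ConcreteCategory.hom_ext _ _ (facr s)) ?_⟩⟩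
  intro s m h₁ h₂
  ext p
  rcases jsurj p with ⟨b, rfl⟩ | ⟨d, rfl⟩
  · exact (ConcreteCategory.congr_hom h₁ b).trans (facl s b).symm
  · exact (ConcreteCategory.congr_hom h₂ d).trans (facr s d).symm

/-- A pointwise pushout square in `Grph` is a pushout square. -/
lemma grph_isPushout {A B D P : Grph} {f : A ⟶ B} {g : A ⟶ D} {h : B ⟶ P} {k : D ⟶ P}
    (w : f ≫ h = g ≫ k)
    (H : ∀ x, IsPushout (f.app x) (g.app x) (h.app x) (k.app x)) : IsPushout f g h k := by
  refine ⟨⟨w⟩, ⟨evaluationJointlyReflectsColimits _ fun x => ?_⟩⟩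
  refine
    (IsColimit.equivOfNatIsoOfIso (spanCompIso ((evaluation WalkingParallelPair Type).obj x) f g)
      _ _ (WalkingSpan.ext ?_ ?_ ?_)).symm (H x).isColimit
  exacts [Iso.refl _, (Category.comp_id _).trans (Category.id_comp _),
    (Category.comp_id _).trans (Category.id_comp _)]

end Stmt8Aux
namespace Stmt8Aux

/-- Build a graph homomorphism out of a `parallelPair` graph. -/
def mkHomFrom {X Y : Type} (s t : X → Y) (G : Grph) (α : X → G.obj .zero)
    (β : Y → G.obj .one) (hs : ∀ e, G.src (α e) = β (s e))
    (ht : ∀ e, G.tgt (α e) = β (t e)) :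
    parallelPair (TypeCat.ofHom s) (TypeCat.ofHom t) ⟶ G where
  app x := match x with
    | .zero => TypeCat.ofHom α
    | .one => TypeCat.ofHom β
  naturality := by
    intro X' Y' (m : WalkingParallelPairHom X' Y')
    cases m with
    | left => exact ConcreteCategory.hom_ext _ _ fun e => (hs e).symm
    | right => exact ConcreteCategory.hom_ext _ _ fun e => (ht e).symm
    | id =>
        show (parallelPair (TypeCat.ofHom s) (TypeCat.ofHom t)).map (𝟙 _) ≫ _ = _ ≫ G.map (𝟙 _)
        rw [CategoryTheory.Functor.map_id, CategoryTheory.Functor.map_id,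
          Category.id_comp, Category.comp_id]

/-- Build a graph homomorphism into a `parallelPair` graph. -/
def mkHomTo (G : Grph) {X Y : Type} (s t : X → Y) (α : G.obj .zero → X)
    (β : G.obj .one → Y) (hs : ∀ e, β (G.src e) = s (α e))
    (ht : ∀ e, β (G.tgt e) = t (α e)) :
    G ⟶ parallelPair (TypeCat.ofHom s) (TypeCat.ofHom t) where
  app x := match x with
    | .zero => TypeCat.ofHom α
    | .one => TypeCat.ofHom β
  naturality := by
    intro X' Y' (m : WalkingParallelPairHom X' Y')
    cases m with
    | left => exact ConcreteCategory.hom_ext _ _ fun e => hs e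
    | right => exact ConcreteCategory.hom_ext _ _ fun e => ht e
    | id =>
        show G.map (𝟙 _) ≫ _ = _ ≫ (parallelPair (TypeCat.ofHom s) (TypeCat.ofHom t)).map (𝟙 _)
        rw [CategoryTheory.Functor.map_id, CategoryTheory.Functor.map_id,
          Category.id_comp, Category.comp_id]

lemma hom_ext' {G H : Grph} {φ ψ : G ⟶ H} (h0 : ∀ e, φ.app .zero e = ψ.app .zero e)
    (h1 : ∀ v, φ.app .one v = ψ.app .one v) : φ = ψ := by
  apply NatTrans.ext
  funext x
  cases x
  · exact ConcreteCategory.hom_ext _ _ h0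
  · exact ConcreteCategory.hom_ext _ _ h1

/-- The empty graph. -/
def G0 : Grph := parallelPair (TypeCat.ofHom fun x : PEmpty => x) (TypeCat.ofHom fun x : PEmpty => x)

/-- One vertex, no edges. -/
def V1 : Grph := parallelPair (TypeCat.ofHom fun x : PEmpty => (x.elim : PUnit))
  (TypeCat.ofHom fun x : PEmpty => (x.elim : PUnit))

/-- Two vertices, no edges. -/
def V2 : Grph := parallelPair (TypeCat.ofHom fun x : PEmpty => (x.elim : Bool))
  (TypeCat.ofHom fun x : PEmpty => (x.elim : Bool))

/-- The interval: one edge `false ⟶ true`. -/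
def Iv : Grph := parallelPair (TypeCat.ofHom fun _ : PUnit => false) (TypeCat.ofHom fun _ : PUnit => true)

/-- The 2-cycle. -/
def C2 : Grph :=
  parallelPair (TypeCat.ofHom fun e : {p : Bool × Bool // p.1 ≠ p.2} => e.1.1)
    (TypeCat.ofHom fun e : {p : Bool × Bool // p.1 ≠ p.2} => e.1.2)

/-- The 2-cycle plus a loop at `false`. -/
def K1 : Grph :=
  parallelPair (TypeCat.ofHom fun e : {p : Bool × Bool // p ≠ (true, true)} => e.1.1)
    (TypeCat.ofHom fun e : {p : Bool × Bool // p ≠ (true, true)} => e.1.2)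

/-- The complete graph on two vertices with loops. -/
def K : Grph := parallelPair (TypeCat.ofHom fun e : Bool × Bool => e.1)
  (TypeCat.ofHom fun e : Bool × Bool => e.2)

variable (l : Lasso Grph)

lemma appSurj (G : Grph) (x : WalkingParallelPair) :
    Function.Surjective ((l.η.app G).app x) := by
  have h := l.epi_components G
  rw [NatTrans.epi_iff_epi_app] at h
  exact (epi_iff_surjective _).mp (h x)

lemma eta_push {G H : Grph} (φ : G ⟶ H) (x : WalkingParallelPair) (a : G.obj x) :
    (l.η.app H).app x (φ.app x a) = (l.L.map φ).app x ((l.η.app G).app x a) := by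
  simpa using ConcreteCategory.congr_hom (congr_app (l.η.naturality φ) x) a

lemma push_eq {G H : Grph} (φ : G ⟶ H) (x : WalkingParallelPair) {a b : G.obj x}
    (hab : (l.η.app G).app x a = (l.η.app G).app x b) :
    (l.η.app H).app x (φ.app x a) = (l.η.app H).app x (φ.app x b) := by
  rw [eta_push, eta_push, hab]

lemma eta_src (G : Grph) (e : G.obj .zero) :
    (l.η.app G).app .one (G.src e) = (l.L.obj G).map .left ((l.η.app G).app .zero e) :=
  ConcreteCategory.congr_hom ((l.η.app G).naturality WalkingParallelPairHom.left) e

lemma eta_tgt (G : Grph) (e : G.obj .zero) :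
    (l.η.app G).app .one (G.tgt e) = (l.L.obj G).map .right ((l.η.app G).app .zero e) :=
  ConcreteCategory.congr_hom ((l.η.app G).naturality WalkingParallelPairHom.right) e

lemma isEmpty_L (G : Grph) (x : WalkingParallelPair) (hx : IsEmpty (G.obj x)) :
    IsEmpty ((l.L.obj G).obj x) :=
  ⟨fun a => by obtain ⟨b, -⟩ := appSurj l G x a; exact hx.elim b⟩

lemma mono_of_injective {G H : Grph} (φ : G ⟶ H)
    (h0 : Function.Injective (φ.app .zero)) (h1 : Function.Injective (φ.app .one)) :
    Mono φ := by
  rw [NatTrans.mono_iff_mono_app]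
  intro x
  cases x
  · exact (CategoryTheory.mono_iff_injective _).mpr h0
  · exact (CategoryTheory.mono_iff_injective _).mpr h1

lemma isIso_of_bijective' {G H : Grph} (φ : G ⟶ H)
    (h0 : Function.Bijective (φ.app .zero)) (h1 : Function.Bijective (φ.app .one)) :
    IsIso φ := by
  have : ∀ x, IsIso (φ.app x) := by
    intro x
    cases x
    · exact (CategoryTheory.isIso_iff_bijective _).mpr h0
    · exact (CategoryTheory.isIso_iff_bijective _).mpr h1
  exact NatIso.isIso_of_isIso_app φ

lemma connRel_eq_of_no_edges (G : Grph) (hE : IsEmpty (G.obj .zero)) {u v : G.obj .one}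
    (h : G.connRel u v) : u = v := by
  induction h with
  | rel a b hab => obtain ⟨e, -, -⟩ := hab; exact hE.elim e
  | refl => rfl
  | symm _ _ _ ih => exact ih.symm
  | trans _ _ _ _ _ ih1 ih2 => exact ih1.trans ih2

/-- Naturality of the lasso unit. -/
lemma nat' {X Y : Grph} (ψ : X ⟶ Y) : ψ ≫ l.η.app Y = l.η.app X ≫ l.L.map ψ := by
  simpa using l.η.naturality ψ

/-- Transfer of `IsIso` of the lasso unit along pushouts of monic spans. -/
lemma isIso_eta_pushout {A B D P : Grph} {f : A ⟶ B} {g : A ⟶ D} {h : B ⟶ P} {k : D ⟶ P}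
    (mf : Mono f) (mg : Mono g) (po : IsPushout f g h k)
    (iA : IsIso (l.η.app A)) (iB : IsIso (l.η.app B)) (iD : IsIso (l.η.app D)) :
    IsIso (l.η.app P) := by
  have po' := l.preserves_monic_pushouts f g h k mf mg po
  have wφ : l.L.map f ≫ (inv (l.η.app B) ≫ h) = l.L.map g ≫ (inv (l.η.app D) ≫ k) := by
    rw [← cancel_epi (l.η.app A)]
    simp only [← Category.assoc]
    rw [← nat' l f, ← nat' l g]
    simp [Category.assoc, po.w]
  refine ⟨po'.desc (inv (l.η.app B) ≫ h) (inv (l.η.app D) ≫ k) wφ, ?_, ?_⟩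
  · apply po.hom_ext
    · rw [← Category.assoc, nat' l h, Category.assoc, po'.inl_desc]
      simp
    · rw [← Category.assoc, nat' l k, Category.assoc, po'.inr_desc]
      simp
  · apply po'.hom_ext
    · rw [po'.inl_desc_assoc, Category.assoc, nat' l h]
      simp
    · rw [po'.inr_desc_assoc, Category.assoc, nat' l k]
      simp

end Stmt8Aux
namespace Stmt8Aux

variable (l : Lasso Grph)

/-- The inclusion of the single vertex into the one-loop graph. -/
def v1ToOneLoop : V1 ⟶ oneLoop :=
  mkHomFrom _ _ oneLoop (fun x => x.elim) (fun _ => PUnit.unit)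
    (fun x => x.elim) (fun x => x.elim)

/-- Inclusion of the one-loop graph into the two-loop graph as the loop `b`. -/
def oneLoopToTwoLoops (b : Bool) : oneLoop ⟶ twoLoops :=
  mkHomFrom _ _ twoLoops (fun _ => b) (fun _ => PUnit.unit)
    (fun _ => rfl) (fun _ => rfl)

lemma twoLoops_po :
    IsPushout v1ToOneLoop v1ToOneLoop (oneLoopToTwoLoops true) (oneLoopToTwoLoops false) := by
  have w : v1ToOneLoop ≫ oneLoopToTwoLoops true = v1ToOneLoop ≫ oneLoopToTwoLoops false :=
    hom_ext' (fun e => PEmpty.elim e) (fun _ => rfl)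
  apply grph_isPushout w
  intro x
  cases x
  · exact types_isPushout_of_isEmpty (A := PEmpty) (B := PUnit) (D := PUnit) (P := Bool)
      _ _ _ _ ⟨fun x => x.elim⟩
      (fun a b _ => Subsingleton.elim a b) (fun a b _ => Subsingleton.elim a b)
      (fun _ _ hh => Bool.noConfusion hh)
      (fun p => by cases p
                   · exact Or.inr ⟨PUnit.unit, rfl⟩
                   · exact Or.inl ⟨PUnit.unit, rfl⟩)
  · haveI : IsIso (v1ToOneLoop.app WalkingParallelPair.one) :=
      (CategoryTheory.isIso_iff_bijective _).mpr
        ⟨fun a b _ => Subsingleton.elim (α := PUnit) a b,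
         fun a => ⟨PUnit.unit, Subsingleton.elim (α := PUnit) PUnit.unit a⟩⟩
    haveI : IsIso ((oneLoopToTwoLoops false).app WalkingParallelPair.one) :=
      (CategoryTheory.isIso_iff_bijective _).mpr
        ⟨fun a b _ => Subsingleton.elim (α := PUnit) a b,
         fun a => ⟨PUnit.unit, Subsingleton.elim (α := PUnit) PUnit.unit a⟩⟩
    exact IsPushout.of_horiz_isIso ⟨ConcreteCategory.hom_ext _ _ fun _ => rfl⟩

lemma mono_v1ToOneLoop : Mono v1ToOneLoop :=
  mono_of_injective _ (fun a => PEmpty.elim a)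
    (fun a b _ => Subsingleton.elim (α := PUnit) a b)

lemma eta_twoLoops_edge_ne :
    (l.η.app twoLoops).app .zero true ≠ (l.η.app twoLoops).app .zero false := by
  have po' := l.preserves_monic_pushouts _ _ _ _ mono_v1ToOneLoop mono_v1ToOneLoop twoLoops_po
  have ev := po'.map ((evaluation WalkingParallelPair Type).obj .zero)
  have disj := types_disjoint_of_isPushout ev
    (isEmpty_L l V1 .zero ⟨fun x => PEmpty.elim x⟩)
  intro hcon
  have h1 := eta_push l (oneLoopToTwoLoops true) .zero PUnit.unit
  have h2 := eta_push l (oneLoopToTwoLoops false) .zero PUnit.unit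
  exact disj _ _ ((h1.symm.trans hcon).trans h2)

/-- Edge components of the lasso unit are always injective. -/
lemma edge_inj (G : Grph) : Function.Injective ((l.η.app G).app .zero) := by
  intro e e' hee
  by_contra hne
  classical
  let r : G ⟶ twoLoops := mkHomTo G _ _ (fun a => if a = e then true else false)
    (fun _ => PUnit.unit) (fun _ => rfl) (fun _ => rfl)
  have h1 := push_eq l r .zero hee
  have h2 : r.app .zero e = true := if_pos rfl
  have h3 : r.app .zero e' = false := if_neg (fun hh : e' = e => hne hh.symm)
  rw [h2, h3] at h1
  exact eta_twoLoops_edge_ne l h1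

/-- Vertices identified by the lasso unit are connected. -/
lemma vertex_conn (G : Grph) {v w : G.obj .one}
    (h : (l.η.app G).app .one v = (l.η.app G).app .one w) : G.connRel v w := by
  by_contra hc
  classical
  set P : G.obj .one → Prop := fun u => G.connRel u v with hP
  have closed : ∀ e, P (G.src e) ↔ P (G.tgt e) := fun e =>
    ⟨fun hp => Relation.EqvGen.trans _ _ _
        (Relation.EqvGen.symm _ _ (Relation.EqvGen.rel _ _ ⟨e, rfl, rfl⟩)) hp,
     fun hp => Relation.EqvGen.trans _ _ _ (Relation.EqvGen.rel _ _ ⟨e, rfl, rfl⟩) hp⟩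
  let GS : Grph := parallelPair
    (TypeCat.ofHom fun e : {e : G.obj .zero // P (G.src e)} =>
      (⟨G.src e.1, e.2⟩ : {u : G.obj .one // P u}))
    (TypeCat.ofHom fun e : {e : G.obj .zero // P (G.src e)} =>
      (⟨G.tgt e.1, (closed e.1).mp e.2⟩ : {u : G.obj .one // P u}))
  let GC : Grph := parallelPair
    (TypeCat.ofHom fun e : {e : G.obj .zero // ¬ P (G.src e)} =>
      (⟨G.src e.1, e.2⟩ : {u : G.obj .one // ¬ P u}))
    (TypeCat.ofHom fun e : {e : G.obj .zero // ¬ P (G.src e)} =>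
      (⟨G.tgt e.1, fun hp => e.2 ((closed e.1).mpr hp)⟩ : {u : G.obj .one // ¬ P u}))
  let ιS : GS ⟶ G := mkHomFrom _ _ G (fun e => e.1) (fun u => u.1)
    (fun _ => rfl) (fun _ => rfl)
  let ιC : GC ⟶ G := mkHomFrom _ _ G (fun e => e.1) (fun u => u.1)
    (fun _ => rfl) (fun _ => rfl)
  let f0 : G0 ⟶ GS := mkHomFrom _ _ GS (fun x => PEmpty.elim x) (fun x => PEmpty.elim x)
    (fun x => PEmpty.elim x) (fun x => PEmpty.elim x)
  let g0 : G0 ⟶ GC := mkHomFrom _ _ GC (fun x => PEmpty.elim x) (fun x => PEmpty.elim x)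
    (fun x => PEmpty.elim x) (fun x => PEmpty.elim x)
  have wsq : f0 ≫ ιS = g0 ≫ ιC :=
    hom_ext' (fun e => PEmpty.elim e) (fun u => PEmpty.elim u)
  have po : IsPushout f0 g0 ιS ιC := by
    apply grph_isPushout wsq
    intro x
    cases x
    · exact types_isPushout_of_isEmpty (A := PEmpty)
        (B := {e : G.obj .zero // P (G.src e)}) (D := {e : G.obj .zero // ¬ P (G.src e)})
        (P := G.obj .zero) _ _ (TypeCat.ofHom fun e => (e.1 : G.obj .zero))
          (TypeCat.ofHom fun e => (e.1 : G.obj .zero))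
        ⟨fun x => x.elim⟩
        (fun a b hh => Subtype.ext hh) (fun a b hh => Subtype.ext hh)
        (fun b d hh => d.2 ((show (b.1 : G.obj .zero) = d.1 from hh) ▸ b.2))
        (fun p => (em (P (G.src p))).imp (fun hp => ⟨⟨p, hp⟩, rfl⟩)
          (fun hp => ⟨⟨p, hp⟩, rfl⟩))
    · exact types_isPushout_of_isEmpty (A := PEmpty)
        (B := {u : G.obj .one // P u}) (D := {u : G.obj .one // ¬ P u})
        (P := G.obj .one) _ _ (TypeCat.ofHom fun u => (u.1 : G.obj .one))
          (TypeCat.ofHom fun u => (u.1 : G.obj .one))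
        ⟨fun x => x.elim⟩
        (fun a b hh => Subtype.ext hh) (fun a b hh => Subtype.ext hh)
        (fun b d hh => d.2 ((show (b.1 : G.obj .one) = d.1 from hh) ▸ b.2))
        (fun p => (em (P p)).imp (fun hp => ⟨⟨p, hp⟩, rfl⟩) (fun hp => ⟨⟨p, hp⟩, rfl⟩))
  have po' := l.preserves_monic_pushouts _ _ _ _
    (mono_of_injective f0 (fun a => PEmpty.elim a) (fun a => PEmpty.elim a))
    (mono_of_injective g0 (fun a => PEmpty.elim a) (fun a => PEmpty.elim a)) po
  have ev := po'.map ((evaluation WalkingParallelPair Type).obj .one)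
  have disj := types_disjoint_of_isPushout ev (isEmpty_L l G0 .one ⟨fun x => PEmpty.elim x⟩)
  have hv : P v := Relation.EqvGen.refl v
  have hw : ¬ P w := fun hp => hc (Relation.EqvGen.symm _ _ hp)
  have h1 := eta_push l ιS .one ⟨v, hv⟩
  have h2 := eta_push l ιC .one ⟨w, hw⟩
  exact disj _ _ ((h1.symm.trans h).trans h2)

end Stmt8Aux
namespace Stmt8Aux

variable (l : Lasso Grph)

lemma isIso_eta_V1 : IsIso (l.η.app V1) :=
  isIso_of_bijective' _ ⟨fun a b _ => PEmpty.elim a, appSurj l V1 .zero⟩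
    ⟨fun a b _ => Subsingleton.elim (α := PUnit) a b, appSurj l V1 .one⟩

lemma isIso_eta_oneLoop : IsIso (l.η.app oneLoop) :=
  isIso_of_bijective' _ ⟨fun a b _ => Subsingleton.elim (α := PUnit) a b,
      appSurj l oneLoop .zero⟩
    ⟨fun a b _ => Subsingleton.elim (α := PUnit) a b, appSurj l oneLoop .one⟩

lemma isIso_eta_V2 : IsIso (l.η.app V2) :=
  isIso_of_bijective' _ ⟨fun a b _ => PEmpty.elim a, appSurj l V2 .zero⟩
    ⟨fun a b hab => connRel_eq_of_no_edges V2 ⟨fun x => PEmpty.elim x⟩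
        (vertex_conn l V2 hab), appSurj l V2 .one⟩

lemma isIso_eta_Iv (hI : (l.η.app Iv).app .one false ≠ (l.η.app Iv).app .one true) :
    IsIso (l.η.app Iv) := by
  refine isIso_of_bijective' _ ⟨fun a b _ => Subsingleton.elim (α := PUnit) a b,
    appSurj l Iv .zero⟩ ⟨?_, appSurj l Iv .one⟩
  intro a b hab
  cases a <;> cases b
  · rfl
  · exact (hI hab).elim
  · exact (hI hab.symm).elim
  · rfl

/-- Span legs for the 2-cycle pushout. -/
def fV2I : V2 ⟶ Iv :=
  mkHomFrom _ _ Iv (fun x => PEmpty.elim x) (fun b => b)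
    (fun x => PEmpty.elim x) (fun x => PEmpty.elim x)

def gV2I : V2 ⟶ Iv :=
  mkHomFrom _ _ Iv (fun x => PEmpty.elim x) (fun b => !b)
    (fun x => PEmpty.elim x) (fun x => PEmpty.elim x)

def hIC2 : Iv ⟶ C2 :=
  mkHomFrom _ _ C2 (fun _ => ⟨(false, true), by decide⟩) (fun b => b)
    (fun _ => rfl) (fun _ => rfl)

def kIC2 : Iv ⟶ C2 :=
  mkHomFrom _ _ C2 (fun _ => ⟨(true, false), by decide⟩) (fun b => !b)
    (fun _ => rfl) (fun _ => rfl)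

lemma c2_po : IsPushout fV2I gV2I hIC2 kIC2 := by
  have wsq : fV2I ≫ hIC2 = gV2I ≫ kIC2 :=
    hom_ext' (fun e => PEmpty.elim e) (fun b => by cases b <;> rfl)
  apply grph_isPushout wsq
  intro x
  cases x
  · exact types_isPushout_of_isEmpty (A := PEmpty) (B := PUnit) (D := PUnit)
      (P := {p : Bool × Bool // p.1 ≠ p.2})
      _ _ (TypeCat.ofHom fun _ => ⟨(false, true), by decide⟩)
        (TypeCat.ofHom fun _ => ⟨(true, false), by decide⟩)
      ⟨fun x => x.elim⟩
      (fun a b _ => Subsingleton.elim a b) (fun a b _ => Subsingleton.elim a b)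
      (fun _ _ hh => Bool.noConfusion
        (congrArg (fun z : {p : Bool × Bool // p.1 ≠ p.2} => z.1.1) hh))
      (fun p => by
        rcases p with ⟨⟨a, b⟩, hp⟩
        cases a <;> cases b
        · exact absurd rfl hp
        · exact Or.inl ⟨PUnit.unit, rfl⟩
        · exact Or.inr ⟨PUnit.unit, rfl⟩
        · exact absurd rfl hp)
  · haveI : IsIso (fV2I.app WalkingParallelPair.one) :=
      (CategoryTheory.isIso_iff_bijective _).mpr
        ⟨fun _ _ hh => hh, fun b => ⟨b, rfl⟩⟩
    haveI : IsIso (kIC2.app WalkingParallelPair.one) :=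
      (CategoryTheory.isIso_iff_bijective _).mpr
        ⟨fun a b hh => by
          cases a <;> cases b
          · rfl
          · exact Bool.noConfusion hh
          · exact Bool.noConfusion hh
          · rfl,
         fun b => ⟨!b, by cases b <;> rfl⟩⟩
    exact IsPushout.of_horiz_isIso ⟨ConcreteCategory.hom_ext _ _ fun b => by cases b <;> rfl⟩

lemma isIso_eta_C2 (hI : (l.η.app Iv).app .one false ≠ (l.η.app Iv).app .one true) :
    IsIso (l.η.app C2) :=
  isIso_eta_pushout l
    (mono_of_injective _ (fun a => PEmpty.elim a) (fun _ _ hh => hh))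
    (mono_of_injective _ (fun a => PEmpty.elim a) (fun a b hh => by
      cases a <;> cases b
      · rfl
      · exact Bool.noConfusion hh
      · exact Bool.noConfusion hh
      · rfl))
    c2_po (isIso_eta_V2 l) (isIso_eta_Iv l hI) (isIso_eta_Iv l hI)

/-- Gluing a loop at `false` onto the 2-cycle. -/
def gV1C2 : V1 ⟶ C2 :=
  mkHomFrom _ _ C2 (fun x => PEmpty.elim x) (fun _ => false)
    (fun x => PEmpty.elim x) (fun x => PEmpty.elim x)

def hOLK1 : oneLoop ⟶ K1 :=
  mkHomFrom _ _ K1 (fun _ => ⟨(false, false), by decide⟩) (fun _ => false)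
    (fun _ => rfl) (fun _ => rfl)

def kC2K1 : C2 ⟶ K1 :=
  mkHomFrom _ _ K1 (fun e => ⟨e.1, fun hh => e.2 (by rw [hh])⟩) (fun b => b)
    (fun _ => rfl) (fun _ => rfl)

lemma k1_po : IsPushout v1ToOneLoop gV1C2 hOLK1 kC2K1 := by
  have wsq : v1ToOneLoop ≫ hOLK1 = gV1C2 ≫ kC2K1 :=
    hom_ext' (fun e => PEmpty.elim e) (fun _ => rfl)
  apply grph_isPushout wsq
  intro x
  cases x
  · exact types_isPushout_of_isEmpty (A := PEmpty) (B := PUnit)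
      (D := {p : Bool × Bool // p.1 ≠ p.2}) (P := {p : Bool × Bool // p ≠ (true, true)})
      _ _ (TypeCat.ofHom fun _ => ⟨(false, false), by decide⟩)
      (TypeCat.ofHom fun e => ⟨e.1, fun hh => e.2 (by rw [hh])⟩)
      ⟨fun x => x.elim⟩
      (fun a b _ => Subsingleton.elim a b)
      (fun a b hh => by
        have h2 := congrArg Subtype.val hh
        exact Subtype.ext h2)
      (fun b d hh => by
        have h2 : ((false, false) : Bool × Bool) = d.1 := congrArg Subtype.val hh
        exact d.2 (by rw [← h2]))
      (fun p => by
        rcases p with ⟨⟨a, b⟩, hp⟩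
        cases a <;> cases b
        · exact Or.inl ⟨PUnit.unit, rfl⟩
        · exact Or.inr ⟨⟨(false, true), by decide⟩, rfl⟩
        · exact Or.inr ⟨⟨(true, false), by decide⟩, rfl⟩
        · exact absurd rfl hp)
  · haveI : IsIso (v1ToOneLoop.app WalkingParallelPair.one) :=
      (CategoryTheory.isIso_iff_bijective _).mpr
        ⟨fun a b _ => Subsingleton.elim (α := PUnit) a b,
         fun a => ⟨PUnit.unit, Subsingleton.elim (α := PUnit) PUnit.unit a⟩⟩
    haveI : IsIso (kC2K1.app WalkingParallelPair.one) :=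
      (CategoryTheory.isIso_iff_bijective _).mpr ⟨fun _ _ hh => hh, fun b => ⟨b, rfl⟩⟩
    exact IsPushout.of_horiz_isIso ⟨ConcreteCategory.hom_ext _ _ fun _ => rfl⟩

lemma isIso_eta_K1 (hI : (l.η.app Iv).app .one false ≠ (l.η.app Iv).app .one true) :
    IsIso (l.η.app K1) :=
  isIso_eta_pushout l mono_v1ToOneLoop
    (mono_of_injective _ (fun a => PEmpty.elim a)
      (fun a b _ => Subsingleton.elim (α := PUnit) a b))
    k1_po (isIso_eta_V1 l) (isIso_eta_oneLoop l) (isIso_eta_C2 l hI)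

/-- Gluing a loop at `true` onto `K1` gives the full graph `K`. -/
def gV1K1 : V1 ⟶ K1 :=
  mkHomFrom _ _ K1 (fun x => PEmpty.elim x) (fun _ => true)
    (fun x => PEmpty.elim x) (fun x => PEmpty.elim x)

def hOLK : oneLoop ⟶ K :=
  mkHomFrom _ _ K (fun _ => ((true, true) : Bool × Bool)) (fun _ => true)
    (fun _ => rfl) (fun _ => rfl)

def kK1K : K1 ⟶ K :=
  mkHomFrom _ _ K (fun e => e.1) (fun b => b) (fun _ => rfl) (fun _ => rfl)

lemma k_po : IsPushout v1ToOneLoop gV1K1 hOLK kK1K := by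
  have wsq : v1ToOneLoop ≫ hOLK = gV1K1 ≫ kK1K :=
    hom_ext' (fun e => PEmpty.elim e) (fun _ => rfl)
  apply grph_isPushout wsq
  intro x
  cases x
  · exact types_isPushout_of_isEmpty (A := PEmpty) (B := PUnit)
      (D := {p : Bool × Bool // p ≠ (true, true)}) (P := Bool × Bool)
      _ _ (TypeCat.ofHom fun _ => ((true, true) : Bool × Bool)) (TypeCat.ofHom fun e => e.1)
      ⟨fun x => x.elim⟩
      (fun a b _ => Subsingleton.elim a b)
      (fun a b hh => Subtype.ext hh)
      (fun b d hh => d.2 (by exact hh.symm))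
      (fun p => by
        by_cases hp : p = (true, true)
        · exact Or.inl ⟨PUnit.unit, hp.symm⟩
        · exact Or.inr ⟨⟨p, hp⟩, rfl⟩)
  · haveI : IsIso (v1ToOneLoop.app WalkingParallelPair.one) :=
      (CategoryTheory.isIso_iff_bijective _).mpr
        ⟨fun a b _ => Subsingleton.elim (α := PUnit) a b,
         fun a => ⟨PUnit.unit, Subsingleton.elim (α := PUnit) PUnit.unit a⟩⟩
    haveI : IsIso (kK1K.app WalkingParallelPair.one) :=
      (CategoryTheory.isIso_iff_bijective _).mpr ⟨fun _ _ hh => hh, fun b => ⟨b, rfl⟩⟩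
    exact IsPushout.of_horiz_isIso ⟨ConcreteCategory.hom_ext _ _ fun _ => rfl⟩

lemma isIso_eta_K (hI : (l.η.app Iv).app .one false ≠ (l.η.app Iv).app .one true) :
    IsIso (l.η.app K) :=
  isIso_eta_pushout l mono_v1ToOneLoop
    (mono_of_injective _ (fun a => PEmpty.elim a)
      (fun a b _ => Subsingleton.elim (α := PUnit) a b))
    k_po (isIso_eta_V1 l) (isIso_eta_oneLoop l) (isIso_eta_K1 l hI)

/-- A nontrivial lasso collapses the endpoints of the generic edge. -/
lemma I_collapse (hni : ¬ ∀ G : Grph, IsIso (l.η.app G)) :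
    (l.η.app Iv).app .one false = (l.η.app Iv).app .one true := by
  by_contra hI
  obtain ⟨G₀, hG₀⟩ := not_forall.mp hni
  have hnotinj : ¬ Function.Injective ((l.η.app G₀).app .one) := fun hinj =>
    hG₀ (isIso_of_bijective' _ ⟨edge_inj l G₀, appSurj l G₀ .zero⟩
      ⟨hinj, appSurj l G₀ .one⟩)
  obtain ⟨u, v, huv, hne⟩ := Function.not_injective_iff.mp hnotinj
  classical
  let φ : G₀ ⟶ K := mkHomTo G₀ _ _
    (fun e => ((if G₀.src e = v then true else false),
               (if G₀.tgt e = v then true else false)))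
    (fun x => if x = v then true else false) (fun _ => rfl) (fun _ => rfl)
  have hKcol := push_eq l φ .one huv
  have h2 : φ.app .one u = false := if_neg hne
  have h3 : φ.app .one v = true := if_pos rfl
  rw [h2, h3] at hKcol
  haveI := isIso_eta_K l hI
  haveI : IsIso ((l.η.app K).app WalkingParallelPair.one) := inferInstance
  have hinjK := ((CategoryTheory.isIso_iff_bijective _).mp this).1
  exact Bool.noConfusion (hinjK hKcol)

end Stmt8Aux
namespace Stmt8Aux

variable (l : Lasso Grph)

lemma collapse_src_tgt
    (hI : (l.η.app Iv).app .one false = (l.η.app Iv).app .one true)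
    (G : Grph) (e : G.obj .zero) :
    (l.η.app G).app .one (G.src e) = (l.η.app G).app .one (G.tgt e) := by
  let φ : Iv ⟶ G := mkHomFrom _ _ G (fun _ => e)
    (fun b => bif b then G.tgt e else G.src e) (fun _ => rfl) (fun _ => rfl)
  have h1 := push_eq l φ .one hI
  exact h1

lemma collapse_conn
    (hI : (l.η.app Iv).app .one false = (l.η.app Iv).app .one true)
    (G : Grph) {u v : G.obj .one} (h : G.connRel u v) :
    (l.η.app G).app .one u = (l.η.app G).app .one v := by
  induction h with
  | rel a b hab =>
      obtain ⟨e, he, ht⟩ := hab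
      rw [← he, ← ht]
      exact collapse_src_tgt l hI G e
  | refl a => rfl
  | symm _ _ _ ih => exact ih.symm
  | trans _ _ _ _ _ ih1 ih2 => exact ih1.trans ih2

end Stmt8Aux

open Stmt8Aux

theorem stmt8 (l : Lasso Grph) (h : ¬ ∀ G : Grph, IsIso (l.η.app G)) (G : Grph) :
    ∃ θ : l.L.obj G ≅ Grph.cc.obj G, l.η.app G ≫ θ.hom = ccπ G := by
  have hI := I_collapse l h
  let ψ : Grph.cc.obj G ⟶ l.L.obj G :=
    mkHomFrom (fun e => Quot.mk G.connRel (G.src e)) (fun e => Quot.mk G.connRel (G.tgt e))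
      (l.L.obj G) ((l.η.app G).app .zero)
      (Quot.lift ((l.η.app G).app .one) (fun _ _ hab => collapse_conn l hI G hab))
      (fun e => (eta_src l G e).symm) (fun e => (eta_tgt l G e).symm)
  have hiso : IsIso ψ := by
    refine isIso_of_bijective' ψ ⟨edge_inj l G, appSurj l G .zero⟩ ⟨?_, ?_⟩
    · intro qa qb hq
      induction qa using Quot.ind with | _ a =>
      induction qb using Quot.ind with | _ b =>
      exact Quot.sound (vertex_conn l G hq)
    · intro y
      obtain ⟨a, ha⟩ := appSurj l G .one y
      exact ⟨Quot.mk _ a, ha⟩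
  haveI := hiso
  refine ⟨(asIso ψ).symm, ?_⟩
  have key : ccπ G ≫ ψ = l.η.app G := hom_ext' (fun e => rfl) (fun v => rfl)
  rw [← key, Category.assoc]
  simp
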